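/- Let n ≥ 1, λ ∈ ℂ^n, and let A be the diagonal n×n complex matrix with diagonal entries λ_1, …, λ_n. Let c, d : ((Fin n → ℕ) × ℤ) → ℂ be finitely supported, and define H(y,t) = Σ_{(l,k)} c(l,k) (∏_s y_s^{l_s}) e^{i k t} and W(y,t) = Σ_{(l,k)} d(l,k) (∏_s y_s^{l_s}) e^{i k t} for y ∈ ℂ^n, t ∈ ℝ. Assume that W is resonant, i.e. d(l,k) = 0 whenever i k + ⟨l,λ⟩ ≠ 0, and that ∂_t H(y,t) + (D_y H(y,t))(A y) = W(y,t) for all (y,t). Then H is resonant, i.e. c(l,k) = 0 whenever i k + ⟨l,λ⟩ ≠ 0, where ⟨l,λ⟩ = Σ_s l_s λ_s. -/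

import Mathlib

/-!
Every pseudomonomial `y^l e^{ikt}` is an eigenfunction of `L̃ = ∂_t + ⟨∂_y ·, Ay⟩` with eigenvalue
`ik + ⟨l,λ⟩`; for the `y`-part, `y^l` restricted to the orbit `r ↦ e^{rA} y` is `e^{r⟨l,λ⟩} y^l`.
Hence `L̃H = W` says `(ik + ⟨l,λ⟩) c(l,k) = d(l,k)` as soon as the pseudomonomials are linearly
independent, which holds because monomials are (a polynomial vanishing on `ℂⁿ` is zero) and the
characters `t ↦ e^{ikt}` are (Dedekind). At a non-resonant `(l,k)` this forces `c(l,k) = 0`.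
-/

open Complex Finset

theorem LinearIndependent.mul_separated {K X Y ι κ : Type*} [CommRing K]
    {f : ι → X → K} {g : κ → Y → K} (hf : LinearIndependent K f) (hg : LinearIndependent K g) :
    LinearIndependent K fun p : ι × κ => fun x y => f p.1 x * g p.2 y := by
  classical
  rw [linearIndependent_iff'']
  intro s a has hsum
  set s₁ := s.image Prod.fst
  set s₂ := s.image Prod.snd
  have hsub : s ⊆ s₁ ×ˢ s₂ := fun p hp =>
    mem_product.2 ⟨mem_image_of_mem _ hp, mem_image_of_mem _ hp⟩
  have hsum' : ∀ x y, ∑ i ∈ s₁, (∑ j ∈ s₂, a (i, j) * g j y) * f i x = 0 := by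
    intro x y
    have := congr_fun₂ hsum x y
    rw [sum_subset hsub fun p _ hp => by rw [has p hp, zero_smul]] at this
    simp only [Finset.sum_apply, Pi.smul_apply, smul_eq_mul, Pi.zero_apply, sum_product] at this
    rw [← this]
    refine sum_congr rfl fun i _ => ?_
    rw [sum_mul]
    exact sum_congr rfl fun j _ => by ring
  have hrow : ∀ i ∈ s₁, ∀ y, ∑ j ∈ s₂, a (i, j) * g j y = 0 := fun i hi y =>
    linearIndependent_iff'.1 hf s₁ (fun i => ∑ j ∈ s₂, a (i, j) * g j y)
      (funext fun x => by simpa using hsum' x y) i hi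
  rintro ⟨i, j⟩
  by_cases hij : (i, j) ∈ s₁ ×ˢ s₂
  · obtain ⟨hi, hj⟩ := mem_product.1 hij
    exact linearIndependent_iff'.1 hg s₂ (fun j => a (i, j))
      (funext fun y => by simpa using hrow i hi y) j hj
  · exact has _ fun h => hij (hsub h)

theorem linearIndependent_prod_pow (K σ : Type*) [CommRing K] [IsDomain K] [Infinite K] [Fintype σ] :
    LinearIndependent K fun (l : σ → ℕ) (y : σ → K) => ∏ s, y s ^ l s := by
  let evalFun : MvPolynomial σ K →ₗ[K] (σ → K) → K :=
    LinearMap.pi fun y => (MvPolynomial.aeval y).toLinearMap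
  have hinj : LinearMap.ker evalFun = ⊥ :=
    LinearMap.ker_eq_bot.2 fun P Q h => MvPolynomial.funext fun y => congr_fun h y
  have hmon : (evalFun ∘ MvPolynomial.basisMonomials σ K) ∘ Finsupp.equivFunOnFinite.symm =
      fun (l : σ → ℕ) (y : σ → K) => ∏ s, y s ^ l s := by
    funext l y
    simp [evalFun, MvPolynomial.aeval_monomial, Finsupp.prod_fintype]
  exact hmon ▸ ((MvPolynomial.basisMonomials σ K).linearIndependent.map' evalFun hinj).comp _
    Finsupp.equivFunOnFinite.symm.injective

theorem hasDerivAt_cexp_mul_ofReal (c : ℂ) (t : ℝ) :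
    HasDerivAt (fun τ : ℝ => exp (c * τ)) (c * exp (c * t)) t := by
  simpa [mul_comm] using ((hasDerivAt_id (t : ℂ)).const_mul c).cexp.comp_ofReal

noncomputable def expIMulChar (k : ℤ) : AddChar ℝ ℂ where
  toFun t := exp (I * k * t)
  map_zero_eq_one' := by simp
  map_add_eq_mul' a b := by rw [← exp_add]; push_cast; ring_nf

theorem expIMulChar_injective : Function.Injective expIMulChar := by
  intro k k' h
  have hfun : (fun τ : ℝ => exp (I * k * τ)) = fun τ : ℝ => exp (I * k' * τ) :=
    funext fun τ => DFunLike.congr_fun h τ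
  have hderiv := (hasDerivAt_cexp_mul_ofReal (I * k) 0).unique
    (hfun ▸ hasDerivAt_cexp_mul_ofReal (I * k') 0)
  simpa [I_ne_zero] using hderiv

theorem linearIndependent_cexp_I_mul :
    LinearIndependent ℂ fun (k : ℤ) (t : ℝ) => exp (I * k * t) :=
  (linearIndependent_monoidHom (Multiplicative ℝ) ℂ).comp
    (fun k => AddChar.toMonoidHomEquiv (expIMulChar k))
    (AddChar.toMonoidHomEquiv.injective.comp expIMulChar_injective)

theorem fderiv_prod_pow_apply_mul {σ : Type*} [Fintype σ] (l : σ → ℕ) (lam y : σ → ℂ) :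
    fderiv ℂ (fun z : σ → ℂ => ∏ s, z s ^ l s) y (lam * y) =
      (∑ s, (l s : ℂ) * lam s) * ∏ s, y s ^ l s := by
  set γ : ℂ → σ → ℂ := fun r s => exp (r * lam s) * y s
  have hγ : HasDerivAt γ (lam * y) 0 := by
    refine hasDerivAt_pi.2 fun s => ?_
    simpa using (((hasDerivAt_id (0 : ℂ)).mul_const (lam s)).cexp.mul_const (y s))
  have hγ0 : γ 0 = y := by simp [γ]
  have hcomp : (fun r => ∏ s, γ r s ^ l s) =
      fun r => exp (r * ∑ s, (l s : ℂ) * lam s) * ∏ s, y s ^ l s := by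
    funext r
    simp only [γ, mul_pow, prod_mul_distrib, ← exp_nat_mul, ← exp_sum, mul_sum]
    congr 2
    exact sum_congr rfl fun s _ => by ring
  have hm : DifferentiableAt ℂ (fun z : σ → ℂ => ∏ s, z s ^ l s) (γ 0) := by fun_prop
  have hchain := hm.hasFDerivAt.comp_hasDerivAt (0 : ℂ) hγ
  rw [Function.comp_def, hcomp, hγ0] at hchain
  refine hchain.unique ?_
  simpa using ((hasDerivAt_id (0 : ℂ)).mul_const (∑ s, (l s : ℂ) * lam s)).cexp.mul_const
    (∏ s, y s ^ l s)

section Pseudomonomial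

variable {σ : Type*} [Fintype σ]

noncomputable def pseudomonomial (p : (σ → ℕ) × ℤ) (y : σ → ℂ) (t : ℝ) : ℂ :=
  (∏ s, y s ^ p.1 s) * exp (I * p.2 * t)

def homologicalEigenvalue (lam : σ → ℂ) (p : (σ → ℕ) × ℤ) : ℂ :=
  I * p.2 + ∑ s, (p.1 s : ℂ) * lam s

noncomputable def homologicalOp (lam : σ → ℂ) (F : (σ → ℂ) → ℝ → ℂ) (y : σ → ℂ) (t : ℝ) : ℂ :=
  deriv (fun τ => F y τ) t + fderiv ℂ (fun z => F z t) y (lam * y)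

theorem linearIndependent_pseudomonomial : LinearIndependent ℂ (pseudomonomial (σ := σ)) :=
  ((linearIndependent_prod_pow ℂ σ).mul_separated linearIndependent_cexp_I_mul :)

theorem hasDerivAt_pseudomonomial (p : (σ → ℕ) × ℤ) (y : σ → ℂ) (t : ℝ) :
    HasDerivAt (fun τ => pseudomonomial p y τ) (I * p.2 * pseudomonomial p y t) t := by
  simpa only [pseudomonomial, mul_left_comm] using
    (hasDerivAt_cexp_mul_ofReal (I * p.2) t).const_mul (∏ s, y s ^ p.1 s)

theorem differentiable_pseudomonomial (p : (σ → ℕ) × ℤ) (t : ℝ) :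
    Differentiable ℂ fun z => pseudomonomial p z t := by
  unfold pseudomonomial
  fun_prop

theorem fderiv_pseudomonomial_apply_mul (p : (σ → ℕ) × ℤ) (lam y : σ → ℂ) (t : ℝ) :
    fderiv ℂ (fun z => pseudomonomial p z t) y (lam * y) =
      (∑ s, (p.1 s : ℂ) * lam s) * pseudomonomial p y t := by
  unfold pseudomonomial
  rw [fderiv_mul_const (by fun_prop), smul_apply, smul_eq_mul,
    fderiv_prod_pow_apply_mul, mul_comm, mul_assoc]

theorem linearCombination_pseudomonomial_of_mem_supported {c : (σ → ℕ) × ℤ →₀ ℂ}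
    {S : Finset ((σ → ℕ) × ℤ)} (hc : c ∈ Finsupp.supported ℂ ℂ ↑S) :
    Finsupp.linearCombination ℂ pseudomonomial c =
      fun y t => ∑ p ∈ S, c p * pseudomonomial p y t := by
  rw [Finsupp.linearCombination_apply_of_mem_supported ℂ hc]
  ext y t
  simp [Finset.sum_apply]

theorem homologicalOp_linearCombination (lam : σ → ℂ) (c : (σ → ℕ) × ℤ →₀ ℂ) :
    homologicalOp lam (Finsupp.linearCombination ℂ pseudomonomial c) =
      Finsupp.linearCombination ℂ pseudomonomial (homologicalEigenvalue lam • c) := by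
  have hμc : homologicalEigenvalue lam • c ∈ Finsupp.supported ℂ ℂ ↑c.support :=
    (Finsupp.mem_supported' _ _).2 fun p hp => by simp [Finsupp.notMem_support_iff.1 hp]
  rw [linearCombination_pseudomonomial_of_mem_supported (Finsupp.mem_supported_support ℂ c),
    linearCombination_pseudomonomial_of_mem_supported hμc]
  funext y t
  have hderiv := HasDerivAt.fun_sum (u := c.support) fun p _ =>
    (hasDerivAt_pseudomonomial p y t).const_mul (c p)
  have hfderiv := HasFDerivAt.fun_sum (u := c.support) fun p _ =>
    ((differentiable_pseudomonomial p t y).hasFDerivAt).const_mul (c p)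
  rw [homologicalOp, hderiv.deriv, hfderiv.fderiv, _root_.sum_apply,
    ← sum_add_distrib]
  refine sum_congr rfl fun p _ => ?_
  rw [smul_apply, smul_eq_mul, fderiv_pseudomonomial_apply_mul, Finsupp.coe_pointwise_smul,
    Pi.smul_apply', smul_eq_mul, homologicalEigenvalue]
  ring

end Pseudomonomial

theorem stmt_7_general {n : ℕ} (lam : Fin n → ℂ)
    (A : Matrix (Fin n) (Fin n) ℂ) (hA : A = Matrix.diagonal lam)
    (c d : ((Fin n → ℕ) × ℤ) →₀ ℂ)
    (H W : (Fin n → ℂ) → ℝ → ℂ)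
    (hH : ∀ (y : Fin n → ℂ) (t : ℝ),
      H y t = c.sum fun p a =>
        a * (∏ s, y s ^ p.1 s) * Complex.exp (Complex.I * (p.2 : ℂ) * (t : ℂ)))
    (hW : ∀ (y : Fin n → ℂ) (t : ℝ),
      W y t = d.sum fun p a =>
        a * (∏ s, y s ^ p.1 s) * Complex.exp (Complex.I * (p.2 : ℂ) * (t : ℂ)))
    (hWres : ∀ (l : Fin n → ℕ) (k : ℤ),
      Complex.I * (k : ℂ) + ∑ s, (l s : ℂ) * lam s ≠ 0 → d (l, k) = 0)
    (hPDE : ∀ (y : Fin n → ℂ) (t : ℝ),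
      deriv (fun τ : ℝ => H y τ) t
        + (fderiv ℂ (fun z => H z t) y) (A.mulVec y) = W y t) :
    ∀ (l : Fin n → ℕ) (k : ℤ),
      Complex.I * (k : ℂ) + ∑ s, (l s : ℂ) * lam s ≠ 0 → c (l, k) = 0 := by
  intro l k hres
  have hHc : H = Finsupp.linearCombination ℂ pseudomonomial c := by
    ext y t
    simp [hH, Finsupp.linearCombination_apply, Finsupp.sum, pseudomonomial, mul_assoc]
  have hWd : W = Finsupp.linearCombination ℂ pseudomonomial d := by
    ext y t
    simp [hW, Finsupp.linearCombination_apply, Finsupp.sum, pseudomonomial, mul_assoc]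
  have hAy : ∀ y, A.mulVec y = lam * y := fun y => by
    ext s
    simp [hA, Matrix.mulVec_diagonal]
  have hLH : homologicalOp lam H = W := by
    ext y t
    rw [homologicalOp, ← hAy, hPDE]
  rw [hHc, hWd, homologicalOp_linearCombination] at hLH
  have hcoeff : homologicalEigenvalue lam (l, k) * c (l, k) = d (l, k) :=
    DFunLike.congr_fun (linearIndependent_pseudomonomial.finsuppLinearCombination_injective hLH)
      (l, k)
  rw [hWres l k hres] at hcoeff
  exact (mul_eq_zero.1 hcoeff).resolve_left hres

/-- Inductive step of Lemma 2.3(b): if `L̃ H = W` with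
`L̃ = ∂_t + ⟨∂_y ·, Ay⟩` (`A = diag λ`), where `H` and `W` are finite sums of
pseudomonomials and `W` is resonant, then `H` is resonant. -/
theorem stmt_7 {n : ℕ} (hn : 1 ≤ n) (lam : Fin n → ℂ)
    (A : Matrix (Fin n) (Fin n) ℂ) (hA : A = Matrix.diagonal lam)
    (c d : ((Fin n → ℕ) × ℤ) →₀ ℂ)
    (H W : (Fin n → ℂ) → ℝ → ℂ)
    (hH : ∀ (y : Fin n → ℂ) (t : ℝ),
      H y t = c.sum fun p a =>
        a * (∏ s, y s ^ p.1 s) * Complex.exp (Complex.I * (p.2 : ℂ) * (t : ℂ)))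
    (hW : ∀ (y : Fin n → ℂ) (t : ℝ),
      W y t = d.sum fun p a =>
        a * (∏ s, y s ^ p.1 s) * Complex.exp (Complex.I * (p.2 : ℂ) * (t : ℂ)))
    (hWres : ∀ (l : Fin n → ℕ) (k : ℤ),
      Complex.I * (k : ℂ) + ∑ s, (l s : ℂ) * lam s ≠ 0 → d (l, k) = 0)
    (hPDE : ∀ (y : Fin n → ℂ) (t : ℝ),
      deriv (fun τ : ℝ => H y τ) t
        + (fderiv ℂ (fun z => H z t) y) (A.mulVec y) = W y t) :
    ∀ (l : Fin n → ℕ) (k : ℤ),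
      Complex.I * (k : ℂ) + ∑ s, (l s : ℂ) * lam s ≠ 0 → c (l, k) = 0 :=
  stmt_7_general lam A hA c d H W hH hW hWres hPDE
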